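/- Let X be a finite nonempty record space, Θ an output type, n ≥ 1, and let M : (Fin n → X) → PMF Θ be a mechanism. Fix a prior π : PMF X, a loss function ℓ : X → X → ℝ≥0, a threshold η ≥ 0, and let κ = sup_{z0 ∈ X} Pr_{x ~ π}[ℓ(x, z0) ≤ η] be the baseline error. If M is ε-differentially private, then M is (η, γ)-BCDistReRo with respect to π and ℓ for γ = n · exp(ε) · κ. -/

import Mathlib

open scoped ENNReal NNReal BigOperators
open Function

/-- Probability that the output of a PMF lands in a set. -/
noncomputable def pmfPr {Θ : Type*} (p : PMF Θ) (S : Set Θ) : ℝ≥0∞ :=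
  p.toOuterMeasure S

/-- Probability weight of a dataset `D` under `n` i.i.d. draws from the prior `π`. -/
noncomputable def iidWeight {X : Type*} {n : ℕ} (π : PMF X) (D : Fin n → X) : ℝ≥0∞ :=
  ∏ i, π (D i)

/-- `(η, γ)`-reconstruction robustness (ReRo): for every coordinate `i`, every fixing
of the other `n-1` records, and every adversary `A`, the probability over the target
`z ~ π` placed at coordinate `i` and `θ ~ M(D[i ↦ z])` that `ℓ z (A θ) ≤ η`
is at most `γ`. -/
def ReRo {X Θ : Type*} [Fintype X] {n : ℕ} (M : (Fin n → X) → PMF Θ)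
    (π : PMF X) (ℓ : X → X → ℝ≥0) (η : ℝ≥0) (γ : ℝ≥0∞) : Prop :=
  ∀ (i : Fin n) (D : Fin n → X) (A : Θ → X),
    ∑ z : X, π z * pmfPr (M (Function.update D i z)) {θ | ℓ z (A θ) ≤ η} ≤ γ

/-- `(η, γ)`-best-case distributional reconstruction robustness (BCDistReRo):
for every adversary `A`, the probability over `D ~ π^n` and `θ ~ M(D)` that the
minimum over coordinates `i` of `ℓ (D i) (A θ)` is at most `η` is bounded by `γ`. -/
def BCDistReRo {X Θ : Type*} [Fintype X] {n : ℕ} (M : (Fin n → X) → PMF Θ)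
    (π : PMF X) (ℓ : X → X → ℝ≥0) (η : ℝ≥0) (γ : ℝ≥0∞) : Prop :=
  ∀ A : Θ → X,
    ∑ D : Fin n → X, iidWeight π D * pmfPr (M D) {θ | ∃ i, ℓ (D i) (A θ) ≤ η} ≤ γ

/-- `(η, γ)`-average distributional reconstruction robustness (AvgDistReRo):
for every adversary `A`, the probability over `D ~ π^n`, `θ ~ M(D)`, and a uniformly
random index `i` that `ℓ (D i) (A θ) ≤ η` is at most `γ`. -/
def AvgDistReRo {X Θ : Type*} [Fintype X] {n : ℕ} (M : (Fin n → X) → PMF Θ)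
    (π : PMF X) (ℓ : X → X → ℝ≥0) (η : ℝ≥0) (γ : ℝ≥0∞) : Prop :=
  ∀ A : Θ → X,
    (n : ℝ≥0∞)⁻¹ * ∑ i : Fin n, ∑ D : Fin n → X,
      iidWeight π D * pmfPr (M D) {θ | ℓ (D i) (A θ) ≤ η} ≤ γ

/-- `ε`-differential privacy: on any pair of datasets differing in at most one
coordinate, the output distributions differ multiplicatively by at most `exp ε`. -/
def DiffPrivate {X Θ : Type*} {n : ℕ} (M : (Fin n → X) → PMF Θ) (ε : ℝ) : Prop :=
  ∀ x x' : Fin n → X, (∃ i : Fin n, ∀ j : Fin n, j ≠ i → x j = x' j) →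
    ∀ S : Set Θ, pmfPr (M x) S ≤ ENNReal.ofReal (Real.exp ε) * pmfPr (M x') S

/-- The baseline error `κ_{π,ℓ}(η) = sup_{z0} Pr_{x ~ π}[ℓ(x, z0) ≤ η]`. -/
noncomputable def baseline {X : Type*} (π : PMF X) (ℓ : X → X → ℝ≥0) (η : ℝ≥0) : ℝ≥0∞ :=
  ⨆ z0 : X, pmfPr π {x | ℓ x z0 ≤ η}

/-! Union bound over the `n` coordinates: it suffices to show that, for each `i`, the
adversary lands within `η` of `D i` with probability at most `exp ε · κ`. By differential
privacy, running `M` on `D` with record `i` overwritten by a fixed `x₀` costs at most the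
factor `exp ε`. That output is independent of `D i`, a fresh draw from `π`, so given `θ` the
guess `A θ` is a fixed point and succeeds with probability `Pr_{x ~ π}[ℓ x (A θ) ≤ η] ≤ κ`. -/

lemma PMF.sum_coe {α : Type*} [Fintype α] (p : PMF α) : ∑ a, p a = 1 := by
  rw [← tsum_fintype (L := .unconditional _), p.tsum_coe]

lemma pmfPr_setOf_exists_le {ι Θ : Type*} [Fintype ι] (p : PMF Θ) (S : ι → Θ → Prop) :
    pmfPr p {θ | ∃ i, S i θ} ≤ ∑ i, pmfPr p {θ | S i θ} := by
  rw [Set.ofPred_exists]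
  exact MeasureTheory.measure_iUnion_fintype_le p.toOuterMeasure _

lemma sum_mul_pmfPr_le_baseline {X Θ : Type*} [Fintype X] (π : PMF X) (ℓ : X → X → ℝ≥0)
    (η : ℝ≥0) (p : PMF Θ) (A : Θ → X) :
    ∑ z, π z * pmfPr p {θ | ℓ z (A θ) ≤ η} ≤ baseline π ℓ η := by
  have hswap : ∑ z, π z * pmfPr p {θ | ℓ z (A θ) ≤ η}
      = ∑' θ, p θ * pmfPr π {x | ℓ x (A θ) ≤ η} := by
    simp only [pmfPr, PMF.toOuterMeasure_apply, tsum_fintype, Finset.mul_sum,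
      ← ENNReal.tsum_mul_left]
    rw [← Summable.tsum_finsetSum fun _ _ => ENNReal.summable]
    refine tsum_congr fun θ => Finset.sum_congr rfl fun x _ => ?_
    by_cases h : ℓ x (A θ) ≤ η <;> simp [h, mul_comm]
  calc ∑ z, π z * pmfPr p {θ | ℓ z (A θ) ≤ η}
      = ∑' θ, p θ * pmfPr π {x | ℓ x (A θ) ≤ η} := hswap
    _ ≤ ∑' θ, p θ * baseline π ℓ η := by
        gcongr with θ
        exact le_iSup (fun z0 => pmfPr π {x | ℓ x z0 ≤ η}) (A θ)
    _ = baseline π ℓ η := by rw [ENNReal.tsum_mul_right, p.tsum_coe, one_mul]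

section Resampling

variable {X : Type*} [Fintype X] {n : ℕ} (π : PMF X)

lemma sum_iidWeight : ∑ D : Fin n → X, iidWeight π D = 1 := by
  simp only [iidWeight, ← Fintype.sum_pow, π.sum_coe, one_pow]

lemma sum_iidWeight_mul_eq_sum_iidWeight_mul_sum_update (i : Fin n)
    (f : (Fin n → X) → ℝ≥0∞) :
    ∑ D, iidWeight π D * f D = ∑ D, iidWeight π D * ∑ z, π z * f (update D i z) := by
  set w : (Fin n → X) → ℝ≥0∞ := fun D => ∏ j : {j // j ≠ i}, π (D j)
  have hweight : ∀ D, iidWeight π D = π (D i) * w D := fun D =>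
    Fintype.prod_eq_mul_prod_subtype_ne _ i
  have hw : ∀ D z, w (update D i z) = w D := fun D z =>
    Finset.prod_congr rfl fun j _ => by rw [update_of_ne j.2]
  -- swapping the old and the redrawn `i`-th record is a measure-preserving involution
  let τ : (Fin n → X) × X → (Fin n → X) × X := fun p => (update p.1 i p.2, p.1 i)
  have hτ : Involutive τ := fun p => by simp [τ]
  let G : (Fin n → X) × X → ℝ≥0∞ := fun p => π p.2 * (π (p.1 i) * w p.1 * f p.1)
  calc ∑ D, iidWeight π D * f D = ∑ p, G p := by
        simp only [G, Fintype.sum_prod_type, ← Finset.sum_mul, π.sum_coe, one_mul, hweight]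
    _ = ∑ p, G (τ p) := (Fintype.sum_bijective τ hτ.bijective _ _ fun _ => rfl).symm
    _ = ∑ D, iidWeight π D * ∑ z, π z * f (update D i z) := by
        simp only [G, τ, Fintype.sum_prod_type, Finset.mul_sum, hweight, hw, update_self]
        refine Fintype.sum_congr _ _ fun D => Fintype.sum_congr _ _ fun z => ?_
        ring

end Resampling

lemma sum_iidWeight_mul_pmfPr_le_baseline {X Θ : Type*} [Fintype X] {n : ℕ} (π : PMF X)
    (ℓ : X → X → ℝ≥0) (η : ℝ≥0) (i : Fin n) (Q : (Fin n → X) → PMF Θ)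
    (hQ : ∀ D z, Q (update D i z) = Q D) (A : Θ → X) :
    ∑ D, iidWeight π D * pmfPr (Q D) {θ | ℓ (D i) (A θ) ≤ η} ≤ baseline π ℓ η :=
  calc ∑ D, iidWeight π D * pmfPr (Q D) {θ | ℓ (D i) (A θ) ≤ η}
      = ∑ D, iidWeight π D * ∑ z, π z * pmfPr (Q D) {θ | ℓ z (A θ) ≤ η} := by
        rw [sum_iidWeight_mul_eq_sum_iidWeight_mul_sum_update π i]
        simp only [hQ, update_self]
    _ ≤ ∑ D, iidWeight π D * baseline π ℓ η := by
        gcongr with D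
        exact sum_mul_pmfPr_le_baseline π ℓ η (Q D) A
    _ = baseline π ℓ η := by rw [← Finset.sum_mul, sum_iidWeight, one_mul]

lemma DiffPrivate.sum_iidWeight_mul_pmfPr_le {X Θ : Type*} [Fintype X] [Nonempty X] {n : ℕ}
    {M : (Fin n → X) → PMF Θ} {ε : ℝ} (hM : DiffPrivate M ε) (π : PMF X) (ℓ : X → X → ℝ≥0)
    (η : ℝ≥0) (A : Θ → X) (i : Fin n) :
    ∑ D, iidWeight π D * pmfPr (M D) {θ | ℓ (D i) (A θ) ≤ η}
      ≤ ENNReal.ofReal (Real.exp ε) * baseline π ℓ η := by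
  obtain ⟨x₀⟩ := ‹Nonempty X›
  calc ∑ D, iidWeight π D * pmfPr (M D) {θ | ℓ (D i) (A θ) ≤ η}
      ≤ ∑ D, iidWeight π D * (ENNReal.ofReal (Real.exp ε) *
          pmfPr (M (update D i x₀)) {θ | ℓ (D i) (A θ) ≤ η}) := by
        gcongr with D
        exact hM _ _ ⟨i, fun j hj => (update_of_ne hj _ _).symm⟩ _
    _ = ENNReal.ofReal (Real.exp ε) * ∑ D, iidWeight π D *
          pmfPr (M (update D i x₀)) {θ | ℓ (D i) (A θ) ≤ η} := by
        simp only [Finset.mul_sum, mul_left_comm]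
    _ ≤ ENNReal.ofReal (Real.exp ε) * baseline π ℓ η := by
        gcongr
        exact sum_iidWeight_mul_pmfPr_le_baseline π ℓ η i _
          (fun D z => by simp only [update_idem]) A

theorem dp_to_bcdistrero_general {X Θ : Type*} [Fintype X] [Nonempty X] {n : ℕ}
    (M : (Fin n → X) → PMF Θ) (π : PMF X) (ℓ : X → X → ℝ≥0) (η : ℝ≥0) (ε : ℝ)
    (hM : DiffPrivate M ε) :
    BCDistReRo M π ℓ η ((n : ℝ≥0∞) * ENNReal.ofReal (Real.exp ε) * baseline π ℓ η) := by
  intro A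
  calc ∑ D, iidWeight π D * pmfPr (M D) {θ | ∃ i, ℓ (D i) (A θ) ≤ η}
      ≤ ∑ D, iidWeight π D * ∑ i, pmfPr (M D) {θ | ℓ (D i) (A θ) ≤ η} := by
        gcongr with D
        exact pmfPr_setOf_exists_le _ _
    _ = ∑ i, ∑ D, iidWeight π D * pmfPr (M D) {θ | ℓ (D i) (A θ) ≤ η} := by
        simp only [Finset.mul_sum]
        exact Finset.sum_comm
    _ ≤ ∑ _i : Fin n, ENNReal.ofReal (Real.exp ε) * baseline π ℓ η := by
        gcongr with i
        exact hM.sum_iidWeight_mul_pmfPr_le π ℓ η A i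
    _ = (n : ℝ≥0∞) * ENNReal.ofReal (Real.exp ε) * baseline π ℓ η := by
        rw [Finset.sum_const, Finset.card_univ, Fintype.card_fin, nsmul_eq_mul, mul_assoc]

/-- If `M` is `ε`-differentially private, then `M` is
`(η, n · exp ε · κ)`-BCDistReRo, where `κ` is the baseline error. -/
theorem dp_to_bcdistrero {X Θ : Type*} [Fintype X] [Nonempty X] {n : ℕ} (hn : 1 ≤ n)
    (M : (Fin n → X) → PMF Θ) (π : PMF X) (ℓ : X → X → ℝ≥0) (η : ℝ≥0) (ε : ℝ)
    (hM : DiffPrivate M ε) :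
    BCDistReRo M π ℓ η ((n : ℝ≥0∞) * ENNReal.ofReal (Real.exp ε) * baseline π ℓ η) :=
  dp_to_bcdistrero_general M π ℓ η ε hM
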